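/- The compressed transition set F_c is well-defined, i.e., F_c ⊆ U_c × {0,1} × U_c: for every u ∈ U_c, the tuple ⟨max(u_1−1,0), …, max(u_m−1,0)⟩ belongs to U_c, and for every u ∈ U_c with u_m = 0, the tuple ⟨u_0, u_1, …, u_{m−1}⟩, with u_0 = k−m if u_{m−1} = 0 and u_0 = k−m − ((k−m−u_1) mod c) otherwise, belongs to U_c. -/
import Mathlib


/-- `Uset k m` : nonincreasing `m`-tuples with entries in `{0, …, k-m}`. -/
def Uset (k m : ℕ) : Set (Fin m → ℕ) :=
  {u | (∀ i, u i ≤ k - m) ∧ ∀ i j : Fin m, i ≤ j → u j ≤ u i}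

/-- `Ucset k m c` : states of the compressed automaton, i.e. the elements `u ∈ U`
such that `(u₁ - u₂) mod c = 0` or `u_m = 0`. -/
def Ucset (k m c : ℕ) (hm : 2 ≤ m) : Set (Fin m → ℕ) :=
  {u | u ∈ Uset k m ∧
    ((u ⟨0, by omega⟩ - u ⟨1, by omega⟩) % c = 0 ∨ u ⟨m - 1, by omega⟩ = 0)}

/-- The target of the `1`-transition: `⟨max(u₁-1,0), …, max(u_m-1,0)⟩`
(in `ℕ`, truncated subtraction realizes `max(· - 1, 0)`). -/
def oneStep (m : ℕ) (u : Fin m → ℕ) : Fin m → ℕ := fun i => u i - 1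

/-- The target of the `0`-transition of the compressed automaton:
`⟨u₀, u₁, …, u_{m-1}⟩` where `u₀ = k - m` if `u_{m-1} = 0` and
`u₀ = k - m - ((k - m - u₁) mod c)` otherwise. -/
def zeroStepC (k m c : ℕ) (hm : 2 ≤ m) (u : Fin m → ℕ) : Fin m → ℕ :=
  fun i => if (i : ℕ) = 0 then
      (if u ⟨m - 2, by omega⟩ = 0 then k - m
       else k - m - (k - m - u ⟨0, by omega⟩) % c)
    else u ⟨(i : ℕ) - 1, lt_of_le_of_lt (Nat.sub_le _ _) i.isLt⟩

/-- Membership in the transition set `F_c` of the compressed automaton `(U_c, F_c)`. -/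
def FcRel (k m c : ℕ) (hm : 2 ≤ m) (u : Fin m → ℕ) (σ : Bool) (u' : Fin m → ℕ) : Prop :=
  u ∈ Ucset k m c hm ∧
  ((σ = true ∧ u' = oneStep m u) ∨
   (σ = false ∧ u ⟨m - 1, by omega⟩ = 0 ∧ u' = zeroStepC k m c hm u))

/-- Well-definedness of `F_c`: both transition targets stay inside `U_c`
(the `0`-transition target, provided the last entry `u_m` is `0`). -/
theorem Fc_well_defined (k m c : ℕ) (hm : 2 ≤ m) (hmk : m < k) (hc : 1 ≤ c) :
    (∀ u ∈ Ucset k m c hm, oneStep m u ∈ Ucset k m c hm) ∧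
    (∀ u ∈ Ucset k m c hm, u ⟨m - 1, by omega⟩ = 0 →
      zeroStepC k m c hm u ∈ Ucset k m c hm) := by
  have h0m : (0:ℕ) < m := by omega
  have h1m : (1:ℕ) < m := by omega
  constructor
  · rintro u ⟨⟨hb, hmono⟩, hcond⟩
    refine ⟨⟨fun i => le_trans (Nat.sub_le _ _) (hb i),
      fun i j hij => Nat.sub_le_sub_right (hmono i j hij) 1⟩, ?_⟩
    simp only [oneStep]
    have h01 := hmono ⟨0, h0m⟩ ⟨1, h1m⟩ (by simp [Fin.le_def])
    have h1last := hmono ⟨1, h1m⟩ ⟨m - 1, by omega⟩ (by simp [Fin.le_def]; omega)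
    rcases hcond with h | h
    · rcases Nat.eq_zero_or_pos (u ⟨1, h1m⟩) with h1 | h1
      · right; omega
      · left
        have heq : u ⟨0, h0m⟩ - 1 - (u ⟨1, h1m⟩ - 1) = u ⟨0, h0m⟩ - u ⟨1, h1m⟩ := by omega
        rw [heq]; exact h
    · right; omega
  · rintro u ⟨⟨hb, hmono⟩, hcond⟩ hlast
    have hv0 : ∀ (h : u ⟨m - 2, by omega⟩ = 0 ∨ True),
        zeroStepC k m c hm u ⟨0, h0m⟩ =
        (if u ⟨m - 2, by omega⟩ = 0 then k - m
         else k - m - (k - m - u ⟨0, h0m⟩) % c) := fun _ => rfl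
    have hbig : u ⟨0, h0m⟩ ≤ (if u ⟨m - 2, by omega⟩ = 0 then k - m
         else k - m - (k - m - u ⟨0, h0m⟩) % c) := by
      split
      · exact hb _
      · have := hb ⟨0, h0m⟩
        have := Nat.mod_le (k - m - u ⟨0, h0m⟩) c
        omega
    refine ⟨⟨fun i => ?_, fun i j hij => ?_⟩, ?_⟩
    · simp only [zeroStepC]
      split
      · split
        · exact le_rfl
        · omega
      · exact hb _
    · simp only [zeroStepC]
      rcases Nat.eq_zero_or_pos (j : ℕ) with hj | hj
      · have hi : (i : ℕ) = 0 := by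
          have := hij; rw [Fin.le_def] at this; omega
        simp [hi, hj]
      · have hjne : ¬ (j : ℕ) = 0 := by omega
        rcases Nat.eq_zero_or_pos (i : ℕ) with hi | hi
        · simp only [hi, hjne, if_true, if_false, if_pos rfl]
          calc u ⟨(j:ℕ) - 1, _⟩ ≤ u ⟨0, h0m⟩ := hmono ⟨0, h0m⟩ _ (by simp [Fin.le_def])
            _ ≤ _ := hbig
        · have hine : ¬ (i : ℕ) = 0 := by omega
          simp only [hine, hjne, if_false]
          refine hmono _ _ ?_
          rw [Fin.le_def] at hij ⊢
          simp; omega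
    · rcases Nat.eq_zero_or_pos (u ⟨m - 2, by omega⟩) with h2 | h2
      · right
        simp only [zeroStepC]
        have : ¬ ((⟨m - 1, by omega⟩ : Fin m) : ℕ) = 0 := by simp; omega
        rw [if_neg this]
        have : ((⟨(m-1) - 1, lt_of_le_of_lt (Nat.sub_le _ _) (by omega : m - 1 < m)⟩ : Fin m)) =
          (⟨m - 2, by omega⟩ : Fin m) := by ext; simp; omega
        simpa [this] using h2
      · left
        have e0 : zeroStepC k m c hm u ⟨0, h0m⟩ = k - m - (k - m - u ⟨0, h0m⟩) % c := by
          simp only [zeroStepC]; rw [if_pos trivial, if_neg (by omega)]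
        have e1 : zeroStepC k m c hm u ⟨1, h1m⟩ = u ⟨0, h0m⟩ := by
          simp only [zeroStepC]
          rw [if_neg (by simp)]
        rw [e0, e1]
        have hble := hb ⟨0, h0m⟩
        have hml := Nat.mod_le (k - m - u ⟨0, h0m⟩) c
        have heq : k - m - (k - m - u ⟨0, h0m⟩) % c - u ⟨0, h0m⟩ =
            (k - m - u ⟨0, h0m⟩) - (k - m - u ⟨0, h0m⟩) % c := by omega
        rw [heq]
        have hd : (k - m - u ⟨0, h0m⟩) - (k - m - u ⟨0, h0m⟩) % c
            = c * ((k - m - u ⟨0, h0m⟩) / c) := by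
          have := Nat.div_add_mod (k - m - u ⟨0, h0m⟩) c; omega
        rw [hd]; exact Nat.mul_mod_right _ _
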